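/- arXiv:1106.1978 — 2 statements merged into one kernel-verified Lean document; each statement's English description precedes it below -/
import Mathlib

section
/- Well-definedness of the refinement operator ρ (Lemma 2 of the paper): For any partition pair (Σ, ⪯) on a finite probabilistic game structure, there exists a unique largest partition pair (Σ', ⪯') ≤ (Σ, ⪯) that is stable on (Σ, ⪯); i.e., if (Σ'', ⪯'') ≤ (Σ, ⪯) is stable on (Σ, ⪯), then (Σ'', ⪯'') ≤ (Σ', ⪯'). -/
namespace PAGame

open Finset

/-- A discrete probability distribution on a finite set `S`:
a function into `[0,1]` summing to `1`. -/
def ProbDist {S : Type*} [Fintype S] (Δ : S → ℝ) : Prop :=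
  (∀ s, 0 ≤ Δ s ∧ Δ s ≤ 1) ∧ ∑ s, Δ s = 1

/-- The Dirac (point) distribution on `s`. -/
noncomputable def diracD {S : Type*} (s : S) : S → ℝ :=
  fun t => by classical exact if t = s then 1 else 0

/-- Lifting of a relation `R ⊆ S × T` to distributions, via weight functions. -/
def LiftRel {S T : Type*} [Fintype S] [Fintype T] (R : S → T → Prop)
    (Δ : S → ℝ) (Θ : T → ℝ) : Prop :=
  ∃ w : S → T → ℝ, (∀ s t, 0 ≤ w s t ∧ w s t ≤ 1) ∧
    (∀ s, ∑ t, w s t = Δ s) ∧ (∀ t, ∑ s, w s t = Θ t) ∧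
    ∀ s t, 0 < w s t → R s t

/-- A partition of `S` into (nonempty) blocks. -/
def IsPartition {S : Type*} (C : Finset (Finset S)) : Prop :=
  (∀ s : S, ∃! B, B ∈ C ∧ s ∈ B) ∧ ∀ B ∈ C, B.Nonempty

/-- `r` is a partial order on the blocks of the partition `C`. -/
def IsPartialOrderOn {S : Type*} (C : Finset (Finset S))
    (r : Finset S → Finset S → Prop) : Prop :=
  (∀ P Q, r P Q → P ∈ C ∧ Q ∈ C) ∧ (∀ P ∈ C, r P P) ∧
  (∀ P Q, r P Q → r Q P → P = Q) ∧ ∀ P Q R', r P Q → r Q R' → r P R'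

/-- A distribution on `S` mapped onto blocks: `Δ_Σ(B) = Δ(B)`. -/
def distOn {S : Type*} (Δ : S → ℝ) : Finset S → ℝ := fun B => ∑ x ∈ B, Δ x

/-- Lifting of a relation on blocks of the partition `C` to distributions over blocks. -/
def LiftRelP {S : Type*} (C : Finset (Finset S)) (r : Finset S → Finset S → Prop)
    (D E : Finset S → ℝ) : Prop :=
  ∃ w : Finset S → Finset S → ℝ, (∀ P Q, 0 ≤ w P Q) ∧
    (∀ P ∈ C, ∑ Q ∈ C, w P Q = D P) ∧ (∀ Q ∈ C, ∑ P ∈ C, w P Q = E Q) ∧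
    ∀ P Q, 0 < w P Q → r P Q

/-- Smyth order on sets, induced by a relation `lift`. -/
def Smyth {α : Type*} (lift : α → α → Prop) (A B : Set α) : Prop :=
  ∀ Θ ∈ B, ∃ Δ ∈ A, lift Δ Θ

/-- The transition function lifted to mixed actions:
`δ̂(s,⟨π₁,π₂⟩)(t) = ∑ π₁(a₁)·π₂(a₂)·δ(s,⟨a₁,a₂⟩)(t)`. -/
def stepD {S A₁ A₂ : Type*} [Fintype A₁] [Fintype A₂]
    (δ : S → A₁ → A₂ → S → ℝ) (s : S) (π₁ : A₁ → ℝ) (π₂ : A₂ → ℝ) : S → ℝ :=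
  fun t => ∑ a₁, ∑ a₂, π₁ a₁ * π₂ a₂ * δ s a₁ a₂ t

/-- `step(s,π)_Σ`: the set of next-state distributions (mapped onto blocks)
possible when player I plays the mixed action `π₁` in `s`. -/
def stepSet {S A₁ A₂ : Type*} [Fintype S] [Fintype A₁] [Fintype A₂]
    (δ : S → A₁ → A₂ → S → ℝ) (s : S) (π₁ : A₁ → ℝ) : Set (Finset S → ℝ) :=
  { D | ∃ π₂ : A₂ → ℝ, ProbDist π₂ ∧ D = distOn (stepD δ s π₁ π₂) }

/-- `t` simulates `s` with respect to player I's choice on the partition pair `(C,r)`. -/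
def SimChoice {S A₁ A₂ : Type*} [Fintype S] [Fintype A₁] [Fintype A₂]
    (C : Finset (Finset S)) (r : Finset S → Finset S → Prop)
    (δ : S → A₁ → A₂ → S → ℝ) (s t : S) : Prop :=
  ∀ π : A₁ → ℝ, ProbDist π → ∃ π' : A₁ → ℝ, ProbDist π' ∧
    Smyth (LiftRelP C r) (stepSet δ s π) (stepSet δ t π')

/-- The partition pair `(C,r)` is stable with respect to player I's choice. -/
def StableChoice {S A₁ A₂ : Type*} [Fintype S] [Fintype A₁] [Fintype A₂]
    (C : Finset (Finset S)) (r : Finset S → Finset S → Prop)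
    (δ : S → A₁ → A₂ → S → ℝ) : Prop :=
  ∀ π : A₁ → ℝ, ProbDist π → ∀ P Q, r P Q → ∀ s ∈ P,
    ∃ π' : A₁ → ℝ, ProbDist π' ∧
      ∀ t ∈ Q, Smyth (LiftRelP C r) (stepSet δ s π) (stepSet δ t π')

/-- Probabilistic alternating I-simulation. -/
def IsPASim {S AP A₁ A₂ : Type*} [Fintype S] [Fintype A₁] [Fintype A₂]
    (L : S → AP) (δ : S → A₁ → A₂ → S → ℝ) (R : S → S → Prop) : Prop :=
  ∀ s t, R s t → L s = L t ∧
    ∀ π₁ : A₁ → ℝ, ProbDist π₁ → ∃ π₁' : A₁ → ℝ, ProbDist π₁' ∧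
      ∀ π₂' : A₂ → ℝ, ProbDist π₂' → ∃ π₂ : A₂ → ℝ, ProbDist π₂ ∧
        LiftRel R (stepD δ s π₁ π₂) (stepD δ t π₁' π₂')

/-- The order on partition pairs: `(C₁,r₁) ≤ (C₂,r₂)` iff `C₁` is finer than `C₂`
and `r₁` is contained in the relation on `C₁` induced by `r₂`. -/
def PPLe {S : Type*} (C₁ : Finset (Finset S)) (r₁ : Finset S → Finset S → Prop)
    (C₂ : Finset (Finset S)) (r₂ : Finset S → Finset S → Prop) : Prop :=
  (∀ P ∈ C₁, ∃ Q ∈ C₂, P ⊆ Q) ∧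
  ∀ P Q, r₁ P Q → ∃ P' Q', P' ∈ C₂ ∧ Q' ∈ C₂ ∧ P ⊆ P' ∧ Q ⊆ Q' ∧ r₂ P' Q'

/-- `(C₁,r₁)` is stable on `(C₂,r₂)`. -/
def StableOn {S A₁ A₂ : Type*} [Fintype S] [Fintype A₁] [Fintype A₂]
    (C₁ : Finset (Finset S)) (r₁ : Finset S → Finset S → Prop)
    (C₂ : Finset (Finset S)) (r₂ : Finset S → Finset S → Prop)
    (δ : S → A₁ → A₂ → S → ℝ) : Prop :=
  ∀ P Q, r₁ P Q → ∀ s ∈ P, ∀ t ∈ Q, SimChoice C₂ r₂ δ s t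

/-- `Δ(↑B)` : the mass of the up-closure of block `B` w.r.t. the order `r`. -/
noncomputable def upMass {S : Type*} (C : Finset (Finset S))
    (r : Finset S → Finset S → Prop) (Δ : S → ℝ) (B : Finset S) : ℝ := by
  classical exact ∑ B' ∈ C, if r B B' then distOn Δ B' else 0

/-- `Δ(↑s)` for a partial order on `S`. -/
noncomputable def upClMass {S : Type*} [Fintype S] [PartialOrder S]
    (Δ : S → ℝ) (s : S) : ℝ := by
  classical exact ∑ t ∈ Finset.univ.filter (fun t => s ≤ t), Δ t

/-- The labelling partition `Σ₀`: states grouped by equal labels. -/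
def labelPartition {S AP : Type*} [Fintype S] [DecidableEq S] [DecidableEq AP]
    (L : S → AP) : Finset (Finset S) :=
  Finset.univ.image (fun s => Finset.univ.filter (fun t => L t = L s))

/-- `(C,r) ≤ (Σ₀, Id)`: blocks have constant labels and related blocks agree on labels. -/
def BelowLabel {S AP : Type*} (L : S → AP) (C : Finset (Finset S))
    (r : Finset S → Finset S → Prop) : Prop :=
  (∀ P ∈ C, ∀ s ∈ P, ∀ t ∈ P, L s = L t) ∧
  ∀ P Q, r P Q → ∀ s ∈ P, ∀ t ∈ Q, L s = L t

/-- `(C',r')` is the largest partition pair below `(C,r)` that is stable on `(C,r)`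
(the refinement operator ρ). -/
def IsRho {S A₁ A₂ : Type*} [Fintype S] [Fintype A₁] [Fintype A₂]
    (δ : S → A₁ → A₂ → S → ℝ)
    (C : Finset (Finset S)) (r : Finset S → Finset S → Prop)
    (C' : Finset (Finset S)) (r' : Finset S → Finset S → Prop) : Prop :=
  (IsPartition C' ∧ IsPartialOrderOn C' r' ∧ PPLe C' r' C r ∧ StableOn C' r' C r δ) ∧
  ∀ C'' r'', IsPartition C'' → IsPartialOrderOn C'' r'' → PPLe C'' r'' C r →
    StableOn C'' r'' C r δ → PPLe C'' r'' C' r'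

end PAGame

namespace PAGame

section Aux

variable {S A₁ A₂ : Type*} [Fintype S] [Fintype A₁] [Fintype A₂]

lemma block_eq {C : Finset (Finset S)} (hC : IsPartition C) {P Q : Finset S} {s : S}
    (hP : P ∈ C) (hQ : Q ∈ C) (hsP : s ∈ P) (hsQ : s ∈ Q) : P = Q := by
  obtain ⟨B, _, hu⟩ := hC.1 s
  exact (hu P ⟨hP, hsP⟩).trans (hu Q ⟨hQ, hsQ⟩).symm

lemma liftRelP_refl {C : Finset (Finset S)} {r : Finset S → Finset S → Prop}
    (hrefl : ∀ P ∈ C, r P P) {D : Finset S → ℝ} (hD : ∀ P, 0 ≤ D P) :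
    LiftRelP C r D D := by
  classical
  refine ⟨fun P Q => if P = Q then (if P ∈ C then D P else 0) else 0, ?_, ?_, ?_, ?_⟩
  · intro P Q
    dsimp only
    split <;> [skip; exact le_refl 0]
    split <;> [exact hD P; exact le_refl 0]
  · intro P hP
    rw [Finset.sum_ite_eq C P (fun Q => if P ∈ C then D P else 0)]
    simp [hP]
  · intro Q hQ
    have : ∀ P, (if P = Q then (if P ∈ C then D P else 0) else 0)
        = (if P = Q then (if Q ∈ C then D Q else 0) else 0) := by
      intro P; split <;> simp_all
    simp only [this]
    rw [Finset.sum_ite_eq' C Q (fun _ => if Q ∈ C then D Q else 0)]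
    simp [hQ]
  · intro P Q hpos
    dsimp only at hpos
    split at hpos
    · split at hpos
      · subst ‹P = Q›; exact hrefl P ‹P ∈ C›
      · exact absurd hpos (lt_irrefl 0)
    · exact absurd hpos (lt_irrefl 0)

lemma liftRelP_trans {C : Finset (Finset S)} {r : Finset S → Finset S → Prop}
    (htr : ∀ P Q R', r P Q → r Q R' → r P R')
    {D E F : Finset S → ℝ}
    (h₁ : LiftRelP C r D E) (h₂ : LiftRelP C r E F) : LiftRelP C r D F := by
  classical
  obtain ⟨w₁, hw₁n, hw₁r, hw₁c, hw₁p⟩ := h₁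
  obtain ⟨w₂, hw₂n, hw₂r, hw₂c, hw₂p⟩ := h₂
  have hE0 : ∀ Q ∈ C, ¬ 0 < E Q → E Q = 0 := by
    intro Q hQ h
    have hnn : 0 ≤ E Q := (hw₁c Q hQ) ▸ Finset.sum_nonneg (fun P _ => hw₁n P Q)
    exact le_antisymm (not_lt.mp h) hnn
  have hw₁0 : ∀ P ∈ C, ∀ Q ∈ C, ¬ 0 < E Q → w₁ P Q = 0 := by
    intro P hP Q hQ h
    exact (Finset.sum_eq_zero_iff_of_nonneg (fun P' _ => hw₁n P' Q)).mp
      ((hw₁c Q hQ).trans (hE0 Q hQ h)) P hP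
  have hw₂0 : ∀ Q ∈ C, ∀ R' ∈ C, ¬ 0 < E Q → w₂ Q R' = 0 := by
    intro Q hQ R' hR' h
    exact (Finset.sum_eq_zero_iff_of_nonneg (fun R'' _ => hw₂n Q R'')).mp
      ((hw₂r Q hQ).trans (hE0 Q hQ h)) R' hR'
  refine ⟨fun P R' => ∑ Q ∈ C, if 0 < E Q then w₁ P Q * w₂ Q R' / E Q else 0,
    ?_, ?_, ?_, ?_⟩
  · intro P R'
    refine Finset.sum_nonneg fun Q _ => ?_
    split
    · exact div_nonneg (mul_nonneg (hw₁n _ _) (hw₂n _ _)) (le_of_lt ‹_›)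
    · exact le_refl 0
  · intro P hP
    rw [Finset.sum_comm]
    have step : ∀ Q ∈ C,
        (∑ R' ∈ C, if 0 < E Q then w₁ P Q * w₂ Q R' / E Q else 0) = w₁ P Q := by
      intro Q hQ
      by_cases h : 0 < E Q
      · simp only [if_pos h]
        rw [← Finset.sum_div, ← Finset.mul_sum, hw₂r Q hQ,
          mul_div_cancel_right₀ _ (ne_of_gt h)]
      · simp only [if_neg h, Finset.sum_const_zero]
        exact (hw₁0 P hP Q hQ h).symm
    rw [Finset.sum_congr rfl step]
    exact hw₁r P hP
  · intro R' hR'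
    rw [Finset.sum_comm]
    have step : ∀ Q ∈ C,
        (∑ P ∈ C, if 0 < E Q then w₁ P Q * w₂ Q R' / E Q else 0) = w₂ Q R' := by
      intro Q hQ
      by_cases h : 0 < E Q
      · simp only [if_pos h]
        simp only [mul_div_assoc]
        rw [← Finset.sum_mul, hw₁c Q hQ]
        field_simp
      · simp only [if_neg h, Finset.sum_const_zero]
        exact (hw₂0 Q hQ R' hR' h).symm
    rw [Finset.sum_congr rfl step]
    exact hw₂c R' hR'
  · intro P R' hpos
    obtain ⟨Q, hQ, hQpos⟩ : ∃ Q ∈ C, 0 < (if 0 < E Q then w₁ P Q * w₂ Q R' / E Q else 0) := by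
      by_contra h
      push_neg at h
      exact absurd (Finset.sum_nonpos h) (not_le.mpr hpos)
    split at hQpos
    · have hmul : 0 < w₁ P Q * w₂ Q R' := by
        have := (div_pos_iff).mp hQpos
        rcases this with ⟨h1, _⟩ | ⟨_, h2⟩
        · exact h1
        · exact absurd h2 (not_lt.mpr (le_of_lt ‹0 < E Q›))
      rcases mul_pos_iff.mp hmul with ⟨h1, h2⟩ | ⟨h1, _⟩
      · exact htr _ _ _ (hw₁p _ _ h1) (hw₂p _ _ h2)
      · exact absurd h1 (not_lt.mpr (hw₁n _ _))
    · exact absurd hQpos (lt_irrefl 0)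

lemma stepSet_nonneg {δ : S → A₁ → A₂ → S → ℝ} (hδ : ∀ s a b, ProbDist (δ s a b))
    {s : S} {π : A₁ → ℝ} (hπ : ProbDist π) {Θ : Finset S → ℝ}
    (hΘ : Θ ∈ stepSet δ s π) : ∀ P, 0 ≤ Θ P := by
  obtain ⟨π₂, hπ₂, rfl⟩ := hΘ
  intro P
  refine Finset.sum_nonneg fun t _ => Finset.sum_nonneg fun a₁ _ =>
    Finset.sum_nonneg fun a₂ _ => ?_
  exact mul_nonneg (mul_nonneg (hπ.1 a₁).1 (hπ₂.1 a₂).1) ((hδ s a₁ a₂).1 t).1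

lemma simChoice_refl {C : Finset (Finset S)} {r : Finset S → Finset S → Prop}
    {δ : S → A₁ → A₂ → S → ℝ} (hδ : ∀ s a b, ProbDist (δ s a b))
    (hrefl : ∀ P ∈ C, r P P) (s : S) : SimChoice C r δ s s := by
  intro π hπ
  refine ⟨π, hπ, fun Θ hΘ => ⟨Θ, hΘ, ?_⟩⟩
  exact liftRelP_refl hrefl (stepSet_nonneg hδ hπ hΘ)

lemma simChoice_trans {C : Finset (Finset S)} {r : Finset S → Finset S → Prop}
    {δ : S → A₁ → A₂ → S → ℝ}
    (htr : ∀ P Q R', r P Q → r Q R' → r P R') {s t u : S}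
    (h1 : SimChoice C r δ s t) (h2 : SimChoice C r δ t u) : SimChoice C r δ s u := by
  intro π hπ
  obtain ⟨π', hπ', hS1⟩ := h1 π hπ
  obtain ⟨π'', hπ'', hS2⟩ := h2 π' hπ'
  refine ⟨π'', hπ'', fun Θ hΘ => ?_⟩
  obtain ⟨E, hE, hEF⟩ := hS2 Θ hΘ
  obtain ⟨Δ, hΔ, hDE⟩ := hS1 E hE
  exact ⟨Δ, hΔ, liftRelP_trans htr hDE hEF⟩

lemma pple_antisymm {C₁ C₂ : Finset (Finset S)}
    {r₁ r₂ : Finset S → Finset S → Prop}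
    (hP₁ : IsPartition C₁) (hP₂ : IsPartition C₂)
    (ho₁ : IsPartialOrderOn C₁ r₁) (ho₂ : IsPartialOrderOn C₂ r₂)
    (h12 : PPLe C₁ r₁ C₂ r₂) (h21 : PPLe C₂ r₂ C₁ r₁) : C₁ = C₂ ∧ r₁ = r₂ := by
  have hsub : ∀ (Ca Cb : Finset (Finset S)), IsPartition Ca → IsPartition Cb →
      (∀ P ∈ Ca, ∃ Q ∈ Cb, P ⊆ Q) → (∀ P ∈ Cb, ∃ Q ∈ Ca, P ⊆ Q) → Ca ⊆ Cb := by
    intro Ca Cb hCa hCb hab hba P hP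
    obtain ⟨Q, hQ, hPQ⟩ := hab P hP
    obtain ⟨P', hP', hQP'⟩ := hba Q hQ
    obtain ⟨s, hs⟩ := hCa.2 P hP
    have hPP' : P = P' := block_eq hCa hP hP' hs (hQP' (hPQ hs))
    have : P = Q := Finset.Subset.antisymm hPQ (hPP' ▸ hQP')
    exact this ▸ hQ
  have hCeq : C₁ = C₂ := Finset.Subset.antisymm
    (hsub C₁ C₂ hP₁ hP₂ h12.1 h21.1) (hsub C₂ C₁ hP₂ hP₁ h21.1 h12.1)
  refine ⟨hCeq, ?_⟩
  have key : ∀ (ra rb : Finset S → Finset S → Prop), IsPartialOrderOn C₁ ra →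
      (∀ P Q, ra P Q → ∃ P' Q', P' ∈ C₁ ∧ Q' ∈ C₁ ∧ P ⊆ P' ∧ Q ⊆ Q' ∧ rb P' Q') →
      ∀ P Q, ra P Q → rb P Q := by
    intro ra rb hoa hab P Q hPQ
    obtain ⟨hPm, hQm⟩ := hoa.1 P Q hPQ
    obtain ⟨P', Q', hP', hQ', hPP', hQQ', hrb⟩ := hab P Q hPQ
    obtain ⟨s, hs⟩ := hP₁.2 P hPm
    obtain ⟨t, ht⟩ := hP₁.2 Q hQm
    have e1 : P = P' := block_eq hP₁ hPm hP' hs (hPP' hs)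
    have e2 : Q = Q' := block_eq hP₁ hQm hQ' ht (hQQ' ht)
    rw [e1, e2]; exact hrb
  funext P Q
  apply propext
  constructor
  · intro h
    exact key r₁ r₂ ho₁ (fun P Q h => by
      obtain ⟨P', Q', h1, h2, h3, h4, h5⟩ := h12.2 P Q h
      exact ⟨P', Q', hCeq ▸ h1, hCeq ▸ h2, h3, h4, h5⟩) P Q h
  · intro h
    exact key r₂ r₁ (hCeq ▸ ho₂) (fun P Q h => by
      obtain ⟨P', Q', h1, h2, h3, h4, h5⟩ := h21.2 P Q h
      exact ⟨P', Q', h1, h2, h3, h4, h5⟩) P Q h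

end Aux

/-- Lemma 2: there is a unique largest partition pair below
`(C,r)` that is stable on `(C,r)` — the operator ρ is well defined. -/
theorem stmt10 {S A₁ A₂ : Type*} [Fintype S] [Fintype A₁] [Fintype A₂]
    (δ : S → A₁ → A₂ → S → ℝ) (hδ : ∀ s a b, ProbDist (δ s a b))
    (C : Finset (Finset S)) (r : Finset S → Finset S → Prop)
    (hC : IsPartition C) (hr : IsPartialOrderOn C r) :
    ∃! p : Finset (Finset S) × (Finset S → Finset S → Prop),
      (IsPartition p.1 ∧ IsPartialOrderOn p.1 p.2 ∧ PPLe p.1 p.2 C r ∧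
        StableOn p.1 p.2 C r δ) ∧
      ∀ C'' r'', IsPartition C'' → IsPartialOrderOn C'' r'' → PPLe C'' r'' C r →
        StableOn C'' r'' C r δ → PPLe C'' r'' p.1 p.2 := by
  classical
  -- the block of `s` in `C`
  have hblk : ∀ s : S, ∃ B, B ∈ C ∧ s ∈ B := fun s => (hC.1 s).exists
  set blk : S → Finset S := fun s => (hblk s).choose with hblkdef
  have blk_mem : ∀ s, blk s ∈ C := fun s => (hblk s).choose_spec.1
  have blk_self : ∀ s, s ∈ blk s := fun s => (hblk s).choose_spec.2
  have blk_eq : ∀ s B, B ∈ C → s ∈ B → blk s = B := fun s B hB hsB =>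
    block_eq hC (blk_mem s) hB (blk_self s) hsB
  -- the simulation preorder refined by `(C,r)`
  set Rel : S → S → Prop := fun s t => SimChoice C r δ s t ∧ r (blk s) (blk t)
    with hReldef
  have Rel_refl : ∀ s, Rel s s := fun s =>
    ⟨simChoice_refl hδ hr.2.1 s, hr.2.1 _ (blk_mem s)⟩
  have Rel_trans : ∀ s t u, Rel s t → Rel t u → Rel s u := fun s t u h1 h2 =>
    ⟨simChoice_trans hr.2.2.2 h1.1 h2.1, hr.2.2.2 _ _ _ h1.2 h2.2⟩
  set Eqv : S → S → Prop := fun s t => Rel s t ∧ Rel t s with hEqvdef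
  have Eqv_refl : ∀ s, Eqv s s := fun s => ⟨Rel_refl s, Rel_refl s⟩
  set cls : S → Finset S := fun s => Finset.univ.filter (fun t => Eqv s t)
    with hclsdef
  have cls_mem : ∀ s t, t ∈ cls s ↔ Eqv s t := by
    intro s t; simp [hclsdef]
  have cls_self : ∀ s, s ∈ cls s := fun s => (cls_mem s s).mpr (Eqv_refl s)
  have cls_eq : ∀ s t, Eqv s t → cls s = cls t := by
    intro s t h
    ext u
    rw [cls_mem, cls_mem]
    constructor
    · intro hu
      exact ⟨Rel_trans _ _ _ h.2 hu.1, Rel_trans _ _ _ hu.2 h.1⟩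
    · intro hu
      exact ⟨Rel_trans _ _ _ h.1 hu.1, Rel_trans _ _ _ hu.2 h.2⟩
  set C' : Finset (Finset S) := Finset.univ.image cls with hC'def
  have C'_mem : ∀ P, P ∈ C' ↔ ∃ s, P = cls s := by
    intro P; simp [hC'def, eq_comm]
  set r' : Finset S → Finset S → Prop := fun P Q =>
    ∃ s t, P = cls s ∧ Q = cls t ∧ Rel s t with hr'def
  -- `C'` is a partition
  have hPart : IsPartition C' := by
    constructor
    · intro s
      refine ⟨cls s, ⟨(C'_mem _).mpr ⟨s, rfl⟩, cls_self s⟩, ?_⟩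
      rintro B ⟨hB, hsB⟩
      obtain ⟨u, rfl⟩ := (C'_mem B).mp hB
      exact cls_eq u s ((cls_mem u s).mp hsB)
    · intro B hB
      obtain ⟨u, rfl⟩ := (C'_mem B).mp hB
      exact ⟨u, cls_self u⟩
  -- `r'` is a partial order on `C'`
  have hPO : IsPartialOrderOn C' r' := by
    refine ⟨?_, ?_, ?_, ?_⟩
    · rintro P Q ⟨s, t, rfl, rfl, _⟩
      exact ⟨(C'_mem _).mpr ⟨s, rfl⟩, (C'_mem _).mpr ⟨t, rfl⟩⟩
    · intro P hP
      obtain ⟨s, rfl⟩ := (C'_mem P).mp hP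
      exact ⟨s, s, rfl, rfl, Rel_refl s⟩
    · rintro P Q ⟨s, t, rfl, rfl, hst⟩ ⟨t', s', het, hes, hts⟩
      have h1 : Eqv t t' := (cls_mem t t').mp (het ▸ cls_self t')
      have h2 : Eqv s s' := (cls_mem s s').mp (hes ▸ cls_self s')
      exact cls_eq s t ⟨hst, Rel_trans _ _ _ h1.1 (Rel_trans _ _ _ hts h2.2)⟩
    · rintro P Q R ⟨s, t, rfl, rfl, hst⟩ ⟨t', u, het, rfl, htu⟩
      have h1 : Eqv t t' := (cls_mem t t').mp (het ▸ cls_self t')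
      exact ⟨s, u, rfl, rfl, Rel_trans _ _ _ hst (Rel_trans _ _ _ h1.1 htu)⟩
  -- `(C',r') ≤ (C,r)`
  have cls_sub : ∀ s, cls s ⊆ blk s := by
    intro s t ht
    have h := (cls_mem s t).mp ht
    have : blk s = blk t := hr.2.2.1 _ _ h.1.2 h.2.2
    exact this ▸ blk_self t
  have hLe : PPLe C' r' C r := by
    constructor
    · intro P hP
      obtain ⟨s, rfl⟩ := (C'_mem P).mp hP
      exact ⟨blk s, blk_mem s, cls_sub s⟩
    · rintro P Q ⟨s, t, rfl, rfl, hst⟩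
      exact ⟨blk s, blk t, blk_mem s, blk_mem t, cls_sub s, cls_sub t, hst.2⟩
  -- `(C',r')` is stable on `(C,r)`
  have hStable : StableOn C' r' C r δ := by
    rintro P Q ⟨s, t, rfl, rfl, hst⟩ s₀ hs₀ t₀ ht₀
    have h1 : Eqv s s₀ := (cls_mem s s₀).mp hs₀
    have h2 : Eqv t t₀ := (cls_mem t t₀).mp ht₀
    exact (Rel_trans _ _ _ h1.2 (Rel_trans _ _ _ hst h2.1)).1
  -- maximality
  have hMax : ∀ C'' r'', IsPartition C'' → IsPartialOrderOn C'' r'' →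
      PPLe C'' r'' C r → StableOn C'' r'' C r δ → PPLe C'' r'' C' r' := by
    intro C'' r'' h₁ h₂ h₃ h₄
    -- all pairs related by `r''` are `Rel`-related
    have keyRel : ∀ P Q, r'' P Q → ∀ s ∈ P, ∀ t ∈ Q, Rel s t := by
      intro P Q hPQ s hs t ht
      refine ⟨h₄ P Q hPQ s hs t ht, ?_⟩
      obtain ⟨P₀, Q₀, hP₀, hQ₀, hPP₀, hQQ₀, hr₀⟩ := h₃.2 P Q hPQ
      rw [blk_eq s P₀ hP₀ (hPP₀ hs), blk_eq t Q₀ hQ₀ (hQQ₀ ht)]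
      exact hr₀
    have keyEqv : ∀ P ∈ C'', ∀ s ∈ P, P ⊆ cls s := by
      intro P hP s hs t ht
      have hrPP : r'' P P := h₂.2.1 P hP
      exact (cls_mem s t).mpr ⟨keyRel P P hrPP s hs t ht, keyRel P P hrPP t ht s hs⟩
    constructor
    · intro P hP
      obtain ⟨s, hs⟩ := h₁.2 P hP
      exact ⟨cls s, (C'_mem _).mpr ⟨s, rfl⟩, keyEqv P hP s hs⟩
    · intro P Q hPQ
      obtain ⟨hPm, hQm⟩ := h₂.1 P Q hPQ
      obtain ⟨s, hs⟩ := h₁.2 P hPm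
      obtain ⟨t, ht⟩ := h₁.2 Q hQm
      refine ⟨cls s, cls t, (C'_mem _).mpr ⟨s, rfl⟩, (C'_mem _).mpr ⟨t, rfl⟩,
        keyEqv P hPm s hs, keyEqv Q hQm t ht, s, t, rfl, rfl,
        keyRel P Q hPQ s hs t ht⟩
  refine ⟨(C', r'), ⟨⟨hPart, hPO, hLe, hStable⟩, hMax⟩, ?_⟩
  rintro ⟨C₂, r₂⟩ ⟨⟨hP₂, hPO₂, hLe₂, hSt₂⟩, hMax₂⟩
  have h12 : PPLe C₂ r₂ C' r' := hMax C₂ r₂ hP₂ hPO₂ hLe₂ hSt₂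
  have h21 : PPLe C' r' C₂ r₂ := hMax₂ C' r' hPart hPO hLe hStable
  obtain ⟨hCeq, hreq⟩ := pple_antisymm hP₂ hPart hPO₂ hPO h12 h21
  exact Prod.ext hCeq hreq

end PAGame
end

section
/- Fixpoint characterization of the largest PA-I-simulation (Theorem 1 of the paper): Let G be a finite probabilistic game structure, Σ₀ its labelling partition, and ρ the stable-refinement operator. Then the decreasing chain ρⁱ((Σ₀, Id)) stabilizes at some finite stage j, and the relation induced by (Σ, ⪯) = ρʲ((Σ₀, Id)) is the largest PA-I-simulation on G. -/
namespace PAGame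

open Finset

variable {S AP A₁ A₂ : Type*}

section Basic
variable [Fintype S] [DecidableEq S]

lemma blk_unique {C : Finset (Finset S)} (hC : IsPartition C) {B B' : Finset S}
    (hB : B ∈ C) (hB' : B' ∈ C) {x : S} (hx : x ∈ B) (hx' : x ∈ B') : B = B' := by
  obtain ⟨B₀, -, hu⟩ := hC.1 x
  rw [hu B ⟨hB, hx⟩, hu B' ⟨hB', hx'⟩]

lemma sum_partition {C : Finset (Finset S)} (hC : IsPartition C) (f : S → ℝ) :
    ∑ B ∈ C, ∑ x ∈ B, f x = ∑ x, f x := by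
  classical
  have h1 : ∀ B ∈ C, ∑ x ∈ B, f x = ∑ x, if x ∈ B then f x else 0 := by
    intro B _
    rw [Finset.sum_ite_mem, Finset.univ_inter]
  rw [Finset.sum_congr rfl h1, Finset.sum_comm]
  refine Finset.sum_congr rfl fun x _ => ?_
  obtain ⟨B₀, ⟨hB₀, hxB₀⟩, hu⟩ := hC.1 x
  rw [Finset.sum_eq_single B₀]
  · simp [hxB₀]
  · intro B hB hne
    have : x ∉ B := fun hx => hne (blk_unique hC hB hB₀ hx hxB₀)
    simp [this]
  · intro h; exact absurd hB₀ h

end Basic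

section Step
variable [Fintype S] [Fintype A₁] [Fintype A₂]

lemma stepD_sum {δ : S → A₁ → A₂ → S → ℝ} (hδ : ∀ s a b, ProbDist (δ s a b))
    {π₁ : A₁ → ℝ} {π₂ : A₂ → ℝ} (h₁ : ProbDist π₁) (h₂ : ProbDist π₂) (s : S) :
    ∑ t, stepD δ s π₁ π₂ t = 1 := by
  unfold stepD
  rw [Finset.sum_comm]
  have : ∀ a₁ ∈ (univ : Finset A₁), ∑ t, ∑ a₂, π₁ a₁ * π₂ a₂ * δ s a₁ a₂ t
      = π₁ a₁ := by
    intro a₁ _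
    rw [Finset.sum_comm]
    have : ∀ a₂ ∈ (univ : Finset A₂), ∑ t, π₁ a₁ * π₂ a₂ * δ s a₁ a₂ t
        = π₁ a₁ * π₂ a₂ := by
      intro a₂ _
      rw [← Finset.mul_sum, (hδ s a₁ a₂).2, mul_one]
    rw [Finset.sum_congr rfl this, ← Finset.mul_sum, h₂.2, mul_one]
  rw [Finset.sum_congr rfl this, h₁.2]

lemma probDist_stepD {δ : S → A₁ → A₂ → S → ℝ} (hδ : ∀ s a b, ProbDist (δ s a b))
    {π₁ : A₁ → ℝ} {π₂ : A₂ → ℝ} (h₁ : ProbDist π₁) (h₂ : ProbDist π₂) (s : S) :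
    ProbDist (stepD δ s π₁ π₂) := by
  have hnn : ∀ t, 0 ≤ stepD δ s π₁ π₂ t := by
    intro t
    refine Finset.sum_nonneg fun a₁ _ => Finset.sum_nonneg fun a₂ _ => ?_
    exact mul_nonneg (mul_nonneg (h₁.1 a₁).1 (h₂.1 a₂).1) ((hδ s a₁ a₂).1 t).1
  refine ⟨fun t => ⟨hnn t, ?_⟩, stepD_sum hδ h₁ h₂ s⟩
  calc stepD δ s π₁ π₂ t ≤ ∑ u, stepD δ s π₁ π₂ u :=
        Finset.single_le_sum (fun u _ => hnn u) (Finset.mem_univ t)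
    _ = 1 := stepD_sum hδ h₁ h₂ s

end Step

end PAGame

namespace PAGame
open Finset

section Lift
variable {S T U : Type*} [Fintype S] [Fintype T] [Fintype U]

lemma liftRel_mono {R R' : S → T → Prop} (h : ∀ s t, R s t → R' s t)
    {Δ : S → ℝ} {Θ : T → ℝ} (hl : LiftRel R Δ Θ) : LiftRel R' Δ Θ := by
  obtain ⟨w, hw1, hw2, hw3, hw4⟩ := hl
  exact ⟨w, hw1, hw2, hw3, fun s t hp => h s t (hw4 s t hp)⟩

lemma liftRel_refl [DecidableEq S] {R : S → S → Prop} (hR : ∀ s, R s s)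
    {Δ : S → ℝ} (hΔ : ∀ s, 0 ≤ Δ s ∧ Δ s ≤ 1) : LiftRel R Δ Δ := by
  refine ⟨fun s t => if t = s then Δ s else 0, fun s t => ?_, fun s => ?_, fun t => ?_,
    fun s t hp => ?_⟩
  · by_cases h : t = s <;> simp [h, hΔ s]
  · simp
  · simp [Finset.sum_ite_eq]
  · by_cases h : t = s
    · subst h; exact hR t
    · simp [h] at hp

lemma liftRel_comp {R₁ : S → T → Prop} {R₂ : T → U → Prop}
    {Δ : S → ℝ} {Θ : T → ℝ} {Ξ : U → ℝ} (hΔ : ∀ s, Δ s ≤ 1)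
    (h1 : LiftRel R₁ Δ Θ) (h2 : LiftRel R₂ Θ Ξ) :
    LiftRel (fun s u => ∃ t, R₁ s t ∧ R₂ t u) Δ Ξ := by
  classical
  obtain ⟨w₁, hw1b, hw1r, hw1c, hw1s⟩ := h1
  obtain ⟨w₂, hw2b, hw2r, hw2c, hw2s⟩ := h2
  -- Θ is nonneg
  have hΘnn : ∀ t, 0 ≤ Θ t := fun t =>
    (hw1c t) ▸ Finset.sum_nonneg fun s _ => (hw1b s t).1
  have hΘ0w1 : ∀ t, Θ t = 0 → ∀ s, w₁ s t = 0 := by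
    intro t ht s
    have h0 : ∑ s, w₁ s t = 0 := by rw [hw1c t, ht]
    exact (Finset.sum_eq_zero_iff_of_nonneg (fun s _ => (hw1b s t).1)).1 h0 s (mem_univ s)
  have hΘ0w2 : ∀ t, Θ t = 0 → ∀ u, w₂ t u = 0 := by
    intro t ht u
    have h0 : ∑ u, w₂ t u = 0 := by rw [hw2r t, ht]
    exact (Finset.sum_eq_zero_iff_of_nonneg (fun u _ => (hw2b t u).1)).1 h0 u (mem_univ u)
  have hw2le : ∀ t u, w₂ t u ≤ Θ t := by
    intro t u
    rw [← hw2r t]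
    exact Finset.single_le_sum (fun u _ => (hw2b t u).1) (mem_univ u)
  set w : S → U → ℝ := fun s u => ∑ t, if 0 < Θ t then w₁ s t * w₂ t u / Θ t else 0 with hw
  have htermnn : ∀ s u t, 0 ≤ (if 0 < Θ t then w₁ s t * w₂ t u / Θ t else 0) := by
    intro s u t
    split
    · exact div_nonneg (mul_nonneg (hw1b s t).1 (hw2b t u).1) (le_of_lt ‹_›)
    · exact le_rfl
  have htermle : ∀ s u t, (if 0 < Θ t then w₁ s t * w₂ t u / Θ t else 0) ≤ w₁ s t := by
    intro s u t
    split
    · rename_i h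
      rw [mul_div_assoc]
      calc w₁ s t * (w₂ t u / Θ t) ≤ w₁ s t * 1 := by
            refine mul_le_mul_of_nonneg_left ?_ (hw1b s t).1
            exact (div_le_one h).2 (hw2le t u)
        _ = w₁ s t := mul_one _
    · exact (hw1b s t).1
  have hwnn : ∀ s u, 0 ≤ w s u := fun s u =>
    Finset.sum_nonneg fun t _ => htermnn s u t
  refine ⟨w, fun s u => ⟨hwnn s u, ?_⟩, fun s => ?_, fun u => ?_, fun s u hp => ?_⟩
  · calc w s u ≤ ∑ t, w₁ s t := Finset.sum_le_sum fun t _ => htermle s u t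
      _ = Δ s := hw1r s
      _ ≤ 1 := hΔ s
  · -- row sums
    rw [hw]
    simp only
    rw [Finset.sum_comm]
    have : ∀ t ∈ (univ : Finset T),
        (∑ u, if 0 < Θ t then w₁ s t * w₂ t u / Θ t else 0) = w₁ s t := by
      intro t _
      by_cases h : 0 < Θ t
      · simp only [h, if_true]
        rw [← Finset.sum_div, ← Finset.mul_sum, hw2r t, mul_div_assoc,
          div_self (ne_of_gt h), mul_one]
      · have ht : Θ t = 0 := le_antisymm (not_lt.1 h) (hΘnn t)
        simp [h, hΘ0w1 t ht s]
    rw [Finset.sum_congr rfl this, hw1r s]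
  · -- column sums
    rw [hw]
    simp only
    rw [Finset.sum_comm]
    have : ∀ t ∈ (univ : Finset T),
        (∑ s, if 0 < Θ t then w₁ s t * w₂ t u / Θ t else 0) = w₂ t u := by
      intro t _
      by_cases h : 0 < Θ t
      · simp only [h, if_true]
        have : ∀ s ∈ (univ : Finset S), w₁ s t * w₂ t u / Θ t = w₁ s t * (w₂ t u / Θ t) := by
          intro s _; rw [mul_div_assoc]
        rw [Finset.sum_congr rfl this, ← Finset.sum_mul, hw1c t, mul_comm,
          div_mul_cancel₀ _ (ne_of_gt h)]
      · have ht : Θ t = 0 := le_antisymm (not_lt.1 h) (hΘnn t)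
        simp [h, hΘ0w2 t ht u]
    rw [Finset.sum_congr rfl this, hw2c u]
  · -- support
    have hne : (∑ t, if 0 < Θ t then w₁ s t * w₂ t u / Θ t else 0) ≠ 0 := by
      show w s u ≠ 0
      exact hp.ne'
    obtain ⟨t, -, hterm⟩ := Finset.exists_ne_zero_of_sum_ne_zero hne
    by_cases h : 0 < Θ t
    · simp only [h, if_true] at hterm
      have h1 : w₁ s t ≠ 0 := by
        intro h0; apply hterm; rw [h0]; ring
      have h2 : w₂ t u ≠ 0 := by
        intro h0; apply hterm; rw [h0]; ring
      exact ⟨t, hw1s s t (lt_of_le_of_ne (hw1b s t).1 (Ne.symm h1)),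
        hw2s t u (lt_of_le_of_ne (hw2b t u).1 (Ne.symm h2))⟩
    · simp [h] at hterm

end Lift
end PAGame

namespace PAGame
open Finset

section PP
variable {S AP : Type*} [Fintype S] [DecidableEq S]

/-- The induced relation of a partition pair. -/
def Ind (C : Finset (Finset S)) (r : Finset S → Finset S → Prop) (s t : S) : Prop :=
  ∃ P Q, P ∈ C ∧ Q ∈ C ∧ s ∈ P ∧ t ∈ Q ∧ r P Q

lemma ind_refl {C : Finset (Finset S)} {r : Finset S → Finset S → Prop}
    (hC : IsPartition C) (hr : IsPartialOrderOn C r) (s : S) : Ind C r s s := by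
  obtain ⟨P, ⟨hP, hs⟩, -⟩ := hC.1 s
  exact ⟨P, P, hP, hP, hs, hs, hr.2.1 P hP⟩

lemma ind_trans {C : Finset (Finset S)} {r : Finset S → Finset S → Prop}
    (hC : IsPartition C) (hr : IsPartialOrderOn C r) {s t u : S}
    (h1 : Ind C r s t) (h2 : Ind C r t u) : Ind C r s u := by
  obtain ⟨P, Q, hP, hQ, hs, ht, hrPQ⟩ := h1
  obtain ⟨Q', R, hQ', hR, ht', hu, hrQR⟩ := h2
  have hQQ : Q = Q' := blk_unique hC hQ hQ' ht ht'
  exact ⟨P, R, hP, hR, hs, hu, hr.2.2.2 P Q' R (hQQ ▸ hrPQ) hrQR⟩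

lemma ppLe_trans {C₁ C₂ C₃ : Finset (Finset S)}
    {r₁ r₂ r₃ : Finset S → Finset S → Prop}
    (h12 : PPLe C₁ r₁ C₂ r₂) (h23 : PPLe C₂ r₂ C₃ r₃) : PPLe C₁ r₁ C₃ r₃ := by
  constructor
  · intro P hP
    obtain ⟨Q, hQ, hPQ⟩ := h12.1 P hP
    obtain ⟨R, hR, hQR⟩ := h23.1 Q hQ
    exact ⟨R, hR, hPQ.trans hQR⟩
  · intro P Q h
    obtain ⟨P', Q', hP', hQ', hPP', hQQ', hr'⟩ := h12.2 P Q h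
    obtain ⟨P'', Q'', hP'', hQ'', hPP'', hQQ'', hr''⟩ := h23.2 P' Q' hr'
    exact ⟨P'', Q'', hP'', hQ'', hPP'.trans hPP'', hQQ'.trans hQQ'', hr''⟩

lemma subset_blk_eq {C : Finset (Finset S)} (hC : IsPartition C) {P Q : Finset S}
    (hP : P ∈ C) (hQ : Q ∈ C) (hPne : P.Nonempty) (hsub : P ⊆ Q) : P = Q := by
  obtain ⟨x, hx⟩ := hPne
  exact blk_unique hC hP hQ hx (hsub hx)

lemma part_subset_mem {C₁ C₂ : Finset (Finset S)}
    (hC₁ : IsPartition C₁) (hC₂ : IsPartition C₂)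
    (hf : ∀ P ∈ C₁, ∃ Q ∈ C₂, P ⊆ Q) (hg : ∀ P ∈ C₂, ∃ Q ∈ C₁, P ⊆ Q) :
    C₁ ⊆ C₂ := by
  intro P hP
  obtain ⟨Q, hQ, hPQ⟩ := hf P hP
  obtain ⟨P', hP', hQP'⟩ := hg Q hQ
  have hPP' : P = P' := subset_blk_eq hC₁ hP hP' (hC₁.2 P hP) (hPQ.trans hQP')
  have hPQ' : P = Q := Finset.Subset.antisymm hPQ (hPP' ▸ hQP')
  exact hPQ' ▸ hQ

lemma ppLe_antisymm {C₁ C₂ : Finset (Finset S)}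
    {r₁ r₂ : Finset S → Finset S → Prop}
    (hC₁ : IsPartition C₁) (hC₂ : IsPartition C₂)
    (hr₁ : IsPartialOrderOn C₁ r₁) (hr₂ : IsPartialOrderOn C₂ r₂)
    (h12 : PPLe C₁ r₁ C₂ r₂) (h21 : PPLe C₂ r₂ C₁ r₁) : C₁ = C₂ ∧ r₁ = r₂ := by
  have hCC : C₁ = C₂ :=
    Finset.Subset.antisymm (part_subset_mem hC₁ hC₂ h12.1 h21.1)
      (part_subset_mem hC₂ hC₁ h21.1 h12.1)
  refine ⟨hCC, ?_⟩
  subst hCC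
  have key : ∀ (r r' : Finset S → Finset S → Prop), IsPartialOrderOn C₁ r →
      (∀ P Q, r P Q → ∃ P' Q', P' ∈ C₁ ∧ Q' ∈ C₁ ∧ P ⊆ P' ∧ Q ⊆ Q' ∧ r' P' Q') →
      ∀ P Q, r P Q → r' P Q := by
    intro r r' hr hle P Q h
    obtain ⟨hP, hQ⟩ := hr.1 P Q h
    obtain ⟨P', Q', hP', hQ', hPP', hQQ', hr'⟩ := hle P Q h
    have e1 : P = P' := subset_blk_eq hC₁ hP hP' (hC₁.2 P hP) hPP'
    have e2 : Q = Q' := subset_blk_eq hC₁ hQ hQ' (hC₁.2 Q hQ) hQQ'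
    rw [e1, e2]; exact hr'
  funext P Q
  exact propext ⟨key r₁ r₂ hr₁ h12.2 P Q, key r₂ r₁ hr₂ h21.2 P Q⟩

lemma labelPartition_isPartition [DecidableEq AP] (L : S → AP) :
    IsPartition (labelPartition L) := by
  constructor
  · intro s
    refine ⟨Finset.univ.filter (fun t => L t = L s), ⟨Finset.mem_image_of_mem _ (mem_univ s), by simp⟩, ?_⟩
    rintro B ⟨hB, hsB⟩
    obtain ⟨u, -, rfl⟩ := Finset.mem_image.1 hB
    have : L s = L u := by simpa using hsB
    ext t; simp [this]
  · intro B hB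
    obtain ⟨u, -, rfl⟩ := Finset.mem_image.1 hB
    exact ⟨u, by simp⟩

lemma labelPartition_isPO [DecidableEq AP] (L : S → AP) :
    IsPartialOrderOn (labelPartition L) (fun P Q => P ∈ labelPartition L ∧ P = Q) := by
  refine ⟨?_, ?_, ?_, ?_⟩
  · rintro P Q ⟨hP, rfl⟩; exact ⟨hP, hP⟩
  · intro P hP; exact ⟨hP, rfl⟩
  · rintro P Q ⟨-, rfl⟩ -; rfl
  · rintro P Q R ⟨hP, rfl⟩ ⟨-, rfl⟩; exact ⟨hP, rfl⟩

lemma labelPartition_label [DecidableEq AP] {L : S → AP} {P : Finset S}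
    (hP : P ∈ labelPartition L) {s t : S} (hs : s ∈ P) (ht : t ∈ P) : L s = L t := by
  obtain ⟨u, -, rfl⟩ := Finset.mem_image.1 hP
  have h1 : L s = L u := by simpa using hs
  have h2 : L t = L u := by simpa using ht
  rw [h1, h2]

end PP
end PAGame

namespace PAGame
open Finset

section Convert
variable {S : Type*} [Fintype S] [DecidableEq S]

lemma distOn_nonneg {Δ : S → ℝ} (h : ∀ s, 0 ≤ Δ s) (P : Finset S) :
    0 ≤ distOn Δ P := Finset.sum_nonneg fun s _ => h s

lemma distOn_le_total {Δ : S → ℝ} (h : ∀ s, 0 ≤ Δ s) (P : Finset S) :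
    distOn Δ P ≤ ∑ s, Δ s :=
  Finset.sum_le_sum_of_subset_of_nonneg (Finset.subset_univ P) (fun s _ _ => h s)

lemma mem_le_distOn {Δ : S → ℝ} (h : ∀ s, 0 ≤ Δ s) {P : Finset S} {s : S}
    (hs : s ∈ P) : Δ s ≤ distOn Δ P :=
  Finset.single_le_sum (fun t _ => h t) hs

/-- Disaggregation: a block-level lifting yields a state-level lifting of the
induced relation. -/
lemma liftRelP_to_liftRel {C : Finset (Finset S)} {r : Finset S → Finset S → Prop}
    (hC : IsPartition C) {Δ Θ : S → ℝ}
    (hΔnn : ∀ s, 0 ≤ Δ s) (hΘnn : ∀ s, 0 ≤ Θ s) (hΔ1 : ∑ s, Δ s ≤ 1)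
    (h : LiftRelP C r (distOn Δ) (distOn Θ)) : LiftRel (Ind C r) Δ Θ := by
  classical
  obtain ⟨w, hwnn, hwr, hwc, hws⟩ := h
  choose blk hblk using fun s => (hC.1 s).exists
  have hblkC : ∀ s, blk s ∈ C := fun s => (hblk s).1
  have hblkm : ∀ s, s ∈ blk s := fun s => (hblk s).2
  have hblk_eq : ∀ {t : S} {Q : Finset S}, Q ∈ C → t ∈ Q → blk t = Q :=
    fun {t Q} hQ ht => blk_unique hC (hblkC t) hQ (hblkm t) ht
  -- zero rows/columns of w
  have hcol0 : ∀ Q ∈ C, distOn Θ Q = 0 → ∀ P ∈ C, w P Q = 0 := by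
    intro Q hQ h0 P hP
    have : ∑ P ∈ C, w P Q = 0 := by rw [hwc Q hQ, h0]
    exact (Finset.sum_eq_zero_iff_of_nonneg (fun P _ => hwnn P Q)).1 this P hP
  have hwle : ∀ P ∈ C, ∀ Q ∈ C, w P Q ≤ distOn Δ P := by
    intro P hP Q hQ
    rw [← hwr P hP]
    exact Finset.single_le_sum (fun Q' _ => hwnn P Q') hQ
  set w' : S → S → ℝ := fun s t =>
    if 0 < distOn Δ (blk s) ∧ 0 < distOn Θ (blk t) then
      w (blk s) (blk t) * (Δ s / distOn Δ (blk s)) * (Θ t / distOn Θ (blk t))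
    else 0 with hw'
  have hw'nn : ∀ s t, 0 ≤ w' s t := by
    intro s t
    rw [hw']; dsimp only
    split
    · rename_i hc
      exact mul_nonneg (mul_nonneg (hwnn _ _) (div_nonneg (hΔnn s) hc.1.le))
        (div_nonneg (hΘnn t) hc.2.le)
    · exact le_rfl
  refine ⟨w', fun s t => ⟨hw'nn s t, ?_⟩, fun s => ?_, fun t => ?_, fun s t hp => ?_⟩
  · -- bound by 1
    rw [hw']; dsimp only
    split
    · rename_i hc
      have h1 : w (blk s) (blk t) ≤ 1 := by
        calc w (blk s) (blk t) ≤ distOn Δ (blk s) := hwle _ (hblkC s) _ (hblkC t)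
          _ ≤ ∑ u, Δ u := distOn_le_total hΔnn _
          _ ≤ 1 := hΔ1
      have h2 : Δ s / distOn Δ (blk s) ≤ 1 :=
        (div_le_one hc.1).2 (mem_le_distOn hΔnn (hblkm s))
      have h3 : Θ t / distOn Θ (blk t) ≤ 1 :=
        (div_le_one hc.2).2 (mem_le_distOn hΘnn (hblkm t))
      have hb1 : w (blk s) (blk t) * (Δ s / distOn Δ (blk s)) ≤ 1 :=
        mul_le_one₀ h1 (div_nonneg (hΔnn s) hc.1.le) h2
      exact mul_le_one₀ hb1 (div_nonneg (hΘnn t) hc.2.le) h3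
    · exact zero_le_one
  · -- row sums
    rw [← sum_partition hC (fun t => w' s t)]
    have hinner : ∀ Q ∈ C, ∑ t ∈ Q, w' s t =
        if 0 < distOn Δ (blk s) ∧ 0 < distOn Θ Q then
          w (blk s) Q * (Δ s / distOn Δ (blk s)) else 0 := by
      intro Q hQ
      have ht : ∀ t ∈ Q, w' s t =
          (if 0 < distOn Δ (blk s) ∧ 0 < distOn Θ Q then
            w (blk s) Q * (Δ s / distOn Δ (blk s)) / distOn Θ Q else 0) * Θ t := by
        intro t htQ
        rw [hw']; dsimp only
        rw [hblk_eq hQ htQ]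
        split
        · ring
        · ring
      rw [Finset.sum_congr rfl ht, ← Finset.mul_sum]
      have hEQ : ∑ t ∈ Q, Θ t = distOn Θ Q := rfl
      rw [hEQ]
      split
      · rename_i hc
        rw [div_mul_cancel₀ _ (ne_of_gt hc.2)]
      · rw [zero_mul]
    rw [Finset.sum_congr rfl hinner]
    by_cases hDP : 0 < distOn Δ (blk s)
    · have : ∀ Q ∈ C, (if 0 < distOn Δ (blk s) ∧ 0 < distOn Θ Q then
          w (blk s) Q * (Δ s / distOn Δ (blk s)) else 0)
          = w (blk s) Q * (Δ s / distOn Δ (blk s)) := by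
        intro Q hQ
        by_cases hEQ : 0 < distOn Θ Q
        · simp [hDP, hEQ]
        · have h0 : distOn Θ Q = 0 := le_antisymm (not_lt.1 hEQ) (distOn_nonneg hΘnn Q)
          rw [hcol0 Q hQ h0 _ (hblkC s)]
          simp [hEQ]
      rw [Finset.sum_congr rfl this, ← Finset.sum_mul, hwr _ (hblkC s), mul_comm,
        div_mul_cancel₀ _ (ne_of_gt hDP)]
    · have h0 : distOn Δ (blk s) = 0 :=
        le_antisymm (not_lt.1 hDP) (distOn_nonneg hΔnn _)
      have hΔs : Δ s = 0 := by
        have h1 : Δ s ≤ 0 := h0 ▸ mem_le_distOn hΔnn (hblkm s)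
        exact le_antisymm h1 (hΔnn s)
      rw [hΔs]
      refine Finset.sum_eq_zero fun Q hQ => ?_
      simp [hDP]
  · -- column sums
    rw [← sum_partition hC (fun s => w' s t)]
    have hinner : ∀ P ∈ C, ∑ s ∈ P, w' s t =
        if 0 < distOn Δ P ∧ 0 < distOn Θ (blk t) then
          w P (blk t) * (Θ t / distOn Θ (blk t)) else 0 := by
      intro P hP
      have hs : ∀ s ∈ P, w' s t =
          (if 0 < distOn Δ P ∧ 0 < distOn Θ (blk t) then
            w P (blk t) * (Θ t / distOn Θ (blk t)) / distOn Δ P else 0) * Δ s := by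
        intro s hsP
        rw [hw']; dsimp only
        rw [hblk_eq hP hsP]
        split
        · ring
        · ring
      rw [Finset.sum_congr rfl hs, ← Finset.mul_sum]
      have hDP : ∑ s ∈ P, Δ s = distOn Δ P := rfl
      rw [hDP]
      split
      · rename_i hc
        rw [div_mul_cancel₀ _ (ne_of_gt hc.1)]
      · rw [zero_mul]
    rw [Finset.sum_congr rfl hinner]
    by_cases hEQ : 0 < distOn Θ (blk t)
    · have hrow0 : ∀ P ∈ C, distOn Δ P = 0 → w P (blk t) = 0 := by
        intro P hP h0
        have : ∑ Q ∈ C, w P Q = 0 := by rw [hwr P hP, h0]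
        exact (Finset.sum_eq_zero_iff_of_nonneg (fun Q _ => hwnn P Q)).1 this _ (hblkC t)
      have : ∀ P ∈ C, (if 0 < distOn Δ P ∧ 0 < distOn Θ (blk t) then
          w P (blk t) * (Θ t / distOn Θ (blk t)) else 0)
          = w P (blk t) * (Θ t / distOn Θ (blk t)) := by
        intro P hP
        by_cases hDP : 0 < distOn Δ P
        · simp [hDP, hEQ]
        · have h0 : distOn Δ P = 0 := le_antisymm (not_lt.1 hDP) (distOn_nonneg hΔnn P)
          rw [hrow0 P hP h0]
          simp [hDP]
      rw [Finset.sum_congr rfl this, ← Finset.sum_mul, hwc _ (hblkC t), mul_comm,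
        div_mul_cancel₀ _ (ne_of_gt hEQ)]
    · have h0 : distOn Θ (blk t) = 0 :=
        le_antisymm (not_lt.1 hEQ) (distOn_nonneg hΘnn _)
      have hΘt : Θ t = 0 := by
        have h1 : Θ t ≤ 0 := h0 ▸ mem_le_distOn hΘnn (hblkm t)
        exact le_antisymm h1 (hΘnn t)
      rw [hΘt]
      refine Finset.sum_eq_zero fun P hP => ?_
      simp [hEQ]
  · -- support
    rw [hw'] at hp; dsimp only at hp
    by_cases hc : 0 < distOn Δ (blk s) ∧ 0 < distOn Θ (blk t)
    · rw [if_pos hc] at hp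
      have hwp : 0 < w (blk s) (blk t) := by
        by_contra hneg
        have : w (blk s) (blk t) = 0 := le_antisymm (not_lt.1 hneg) (hwnn _ _)
        rw [this] at hp; simp at hp
      exact ⟨blk s, blk t, hblkC s, hblkC t, hblkm s, hblkm t, hws _ _ hwp⟩
    · rw [if_neg hc] at hp
      exact absurd hp (lt_irrefl 0)

/-- Aggregation: a state-level lifting whose relation is below the induced
relation yields a block-level lifting. -/
lemma liftRel_to_liftRelP {C : Finset (Finset S)} {r : Finset S → Finset S → Prop}
    (hC : IsPartition C) {R : S → S → Prop} {Δ Θ : S → ℝ}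
    (hsupp : ∀ s t, R s t → Ind C r s t)
    (h : LiftRel R Δ Θ) : LiftRelP C r (distOn Δ) (distOn Θ) := by
  classical
  obtain ⟨w, hwb, hwr, hwc, hws⟩ := h
  set W : Finset S → Finset S → ℝ := fun P Q =>
    if P ∈ C ∧ Q ∈ C then ∑ s ∈ P, ∑ t ∈ Q, w s t else 0 with hW
  have hWnn : ∀ P Q, 0 ≤ W P Q := by
    intro P Q
    rw [hW]; dsimp only
    split
    · exact Finset.sum_nonneg fun s _ => Finset.sum_nonneg fun t _ => (hwb s t).1
    · exact le_rfl
  refine ⟨W, hWnn, fun P hP => ?_, fun Q hQ => ?_, fun P Q hp => ?_⟩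
  · have : ∀ Q ∈ C, W P Q = ∑ s ∈ P, ∑ t ∈ Q, w s t := by
      intro Q hQ; rw [hW]; dsimp only; rw [if_pos ⟨hP, hQ⟩]
    rw [Finset.sum_congr rfl this, Finset.sum_comm]
    refine Finset.sum_congr rfl fun s _ => ?_
    rw [sum_partition hC (fun t => w s t), hwr s]
  · have : ∀ P ∈ C, W P Q = ∑ t ∈ Q, ∑ s ∈ P, w s t := by
      intro P hP; rw [hW]; dsimp only; rw [if_pos ⟨hP, hQ⟩, Finset.sum_comm]
    rw [Finset.sum_congr rfl this, Finset.sum_comm]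
    refine Finset.sum_congr rfl fun t _ => ?_
    rw [sum_partition hC (fun s => w s t), hwc t]
  · -- support
    rw [hW] at hp; dsimp only at hp
    by_cases hc : P ∈ C ∧ Q ∈ C
    · rw [if_pos hc] at hp
      have h1 : ∃ s ∈ P, (∑ t ∈ Q, w s t) ≠ 0 :=
        Finset.exists_ne_zero_of_sum_ne_zero hp.ne'
      obtain ⟨s, hsP, hs⟩ := h1
      obtain ⟨t, htQ, ht⟩ := Finset.exists_ne_zero_of_sum_ne_zero hs
      have hwp : 0 < w s t := lt_of_le_of_ne (hwb s t).1 (Ne.symm ht)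
      obtain ⟨P', Q', hP', hQ', hsP', htQ', hr'⟩ := hsupp s t (hws s t hwp)
      rw [blk_unique hC hc.1 hP' hsP hsP', blk_unique hC hc.2 hQ' htQ htQ']
      exact hr'
    · rw [if_neg hc] at hp
      exact absurd hp (lt_irrefl 0)

end Convert
end PAGame

namespace PAGame
open Finset

section Sim
variable {S AP A₁ A₂ : Type*} [Fintype S] [DecidableEq S] [Fintype A₁] [Fintype A₂]

/-- The simulation transfer clause for a single pair. -/
def SimClause (δ : S → A₁ → A₂ → S → ℝ) (R : S → S → Prop) (s t : S) : Prop :=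
  ∀ π₁ : A₁ → ℝ, ProbDist π₁ → ∃ π₁' : A₁ → ℝ, ProbDist π₁' ∧
    ∀ π₂' : A₂ → ℝ, ProbDist π₂' → ∃ π₂ : A₂ → ℝ, ProbDist π₂ ∧
      LiftRel R (stepD δ s π₁ π₂) (stepD δ t π₁' π₂')

lemma simClause_mono {δ : S → A₁ → A₂ → S → ℝ} {R R' : S → S → Prop}
    (h : ∀ s t, R s t → R' s t) {s t : S} (hc : SimClause δ R s t) :
    SimClause δ R' s t := by
  intro π₁ h₁
  obtain ⟨π₁', h₁', hrest⟩ := hc π₁ h₁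
  refine ⟨π₁', h₁', fun π₂' h₂' => ?_⟩
  obtain ⟨π₂, h₂, hl⟩ := hrest π₂' h₂'
  exact ⟨π₂, h₂, liftRel_mono h hl⟩

lemma simClause_refl {δ : S → A₁ → A₂ → S → ℝ} (hδ : ∀ s a b, ProbDist (δ s a b))
    {R : S → S → Prop} (hR : ∀ s, R s s) (s : S) : SimClause δ R s s := by
  intro π₁ h₁
  refine ⟨π₁, h₁, fun π₂' h₂' => ⟨π₂', h₂', ?_⟩⟩
  exact liftRel_refl hR (probDist_stepD hδ h₁ h₂' s).1

lemma simClause_comp {δ : S → A₁ → A₂ → S → ℝ} (hδ : ∀ s a b, ProbDist (δ s a b))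
    {Ra Rb : S → S → Prop} {s t u : S}
    (h1 : SimClause δ Ra s t) (h2 : SimClause δ Rb t u) :
    SimClause δ (fun x z => ∃ y, Ra x y ∧ Rb y z) s u := by
  intro π₁ hπ₁
  obtain ⟨π', hπ', hr1⟩ := h1 π₁ hπ₁
  obtain ⟨π'', hπ'', hr2⟩ := h2 π' hπ'
  refine ⟨π'', hπ'', fun π₂'' hπ₂'' => ?_⟩
  obtain ⟨π₂', hπ₂', hl2⟩ := hr2 π₂'' hπ₂''
  obtain ⟨π₂, hπ₂, hl1⟩ := hr1 π₂' hπ₂'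
  refine ⟨π₂, hπ₂, liftRel_comp ?_ hl1 hl2⟩
  exact fun x => ((probDist_stepD hδ hπ₁ hπ₂ s).1 x).2

lemma isPASim_rtg {L : S → AP} {δ : S → A₁ → A₂ → S → ℝ}
    (hδ : ∀ s a b, ProbDist (δ s a b)) {R : S → S → Prop}
    (h : IsPASim L δ R) : IsPASim L δ (Relation.ReflTransGen R) := by
  intro s t hst
  induction hst with
  | refl =>
    refine ⟨rfl, ?_⟩
    exact simClause_refl hδ (fun s => Relation.ReflTransGen.refl) s
  | tail hab hbc ih =>
    rename_i b c
    obtain ⟨hL1, hcl1⟩ := ih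
    obtain ⟨hL2, hcl2⟩ := h b c hbc
    refine ⟨hL1.trans hL2, ?_⟩
    have hcomp := simClause_comp hδ (Ra := Relation.ReflTransGen R) (Rb := R)
      hcl1 hcl2
    refine simClause_mono ?_ hcomp
    rintro x z ⟨y, hxy, hyz⟩
    exact hxy.tail hyz

end Sim
end PAGame

namespace PAGame
open Finset

section Quot
variable {S : Type*} [Fintype S] [DecidableEq S]

/-- Equivalence class of `s` under the symmetrization of a preorder. -/
noncomputable def cls (R' : S → S → Prop) (s : S) : Finset S := by
  classical exact Finset.univ.filter (fun t => R' s t ∧ R' t s)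

/-- The quotient partition of a preorder. -/
noncomputable def clsPart (R' : S → S → Prop) : Finset (Finset S) :=
  Finset.univ.image (cls R')

/-- The induced order on the quotient. -/
def clsRel (R' : S → S → Prop) (P Q : Finset S) : Prop :=
  ∃ s t, P = cls R' s ∧ Q = cls R' t ∧ R' s t

variable {R' : S → S → Prop} (hrefl : ∀ s, R' s s) (htrans : Transitive R')

lemma mem_cls {s t : S} : t ∈ cls R' s ↔ R' s t ∧ R' t s := by
  classical
  simp [cls]

include hrefl in
lemma self_mem_cls (s : S) : s ∈ cls R' s := mem_cls.2 ⟨hrefl s, hrefl s⟩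

include htrans in
lemma cls_eq {s t : S} (h1 : R' s t) (h2 : R' t s) : cls R' s = cls R' t := by
  ext u
  rw [mem_cls, mem_cls]
  exact ⟨fun ⟨ha, hb⟩ => ⟨htrans h2 ha, htrans hb h1⟩,
    fun ⟨ha, hb⟩ => ⟨htrans h1 ha, htrans hb h2⟩⟩

include hrefl htrans in
lemma clsPart_isPartition : IsPartition (clsPart R') := by
  constructor
  · intro s
    refine ⟨cls R' s, ⟨Finset.mem_image_of_mem _ (mem_univ s), self_mem_cls hrefl s⟩, ?_⟩
    rintro B ⟨hB, hsB⟩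
    obtain ⟨u, -, rfl⟩ := Finset.mem_image.1 hB
    obtain ⟨h1, h2⟩ := mem_cls.1 hsB
    exact cls_eq htrans h1 h2
  · intro B hB
    obtain ⟨u, -, rfl⟩ := Finset.mem_image.1 hB
    exact ⟨u, self_mem_cls hrefl u⟩

include hrefl htrans in
lemma clsRel_isPO : IsPartialOrderOn (clsPart R') (clsRel R') := by
  refine ⟨?_, ?_, ?_, ?_⟩
  · rintro P Q ⟨s, t, rfl, rfl, -⟩
    exact ⟨Finset.mem_image_of_mem _ (mem_univ s), Finset.mem_image_of_mem _ (mem_univ t)⟩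
  · intro P hP
    obtain ⟨u, -, rfl⟩ := Finset.mem_image.1 hP
    exact ⟨u, u, rfl, rfl, hrefl u⟩
  · rintro P Q ⟨s, t, rfl, rfl, hst⟩ ⟨t', s', het, hes, hts⟩
    have h1m : t' ∈ cls R' t := by rw [het]; exact self_mem_cls hrefl t'
    have h2m : s' ∈ cls R' s := by rw [hes]; exact self_mem_cls hrefl s'
    have h1 := mem_cls.1 h1m
    have h2 := mem_cls.1 h2m
    exact cls_eq htrans hst (htrans h1.1 (htrans hts h2.2))
  · rintro P Q R ⟨s, t, rfl, rfl, hst⟩ ⟨t', u, het, rfl, htu⟩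
    have h1m : t' ∈ cls R' t := by rw [het]; exact self_mem_cls hrefl t'
    have h1 := mem_cls.1 h1m
    exact ⟨s, u, rfl, rfl, htrans hst (htrans h1.1 htu)⟩

end Quot

section Convert2
variable {S AP A₁ A₂ : Type*} [Fintype S] [DecidableEq S] [Fintype A₁] [Fintype A₂]

lemma simClause_to_simChoice {C : Finset (Finset S)} {r : Finset S → Finset S → Prop}
    (hC : IsPartition C) {δ : S → A₁ → A₂ → S → ℝ}
    (hδ : ∀ s a b, ProbDist (δ s a b)) {R' : S → S → Prop}
    (hsupp : ∀ x y, R' x y → Ind C r x y) {s t : S}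
    (hcl : SimClause δ R' s t) : SimChoice C r δ s t := by
  intro π hπ
  obtain ⟨π', hπ', hrest⟩ := hcl π hπ
  refine ⟨π', hπ', ?_⟩
  rintro Θ ⟨π₂', hπ₂', rfl⟩
  obtain ⟨π₂, hπ₂, hl⟩ := hrest π₂' hπ₂'
  exact ⟨distOn (stepD δ s π π₂), ⟨π₂, hπ₂, rfl⟩, liftRel_to_liftRelP hC hsupp hl⟩

lemma stable_to_isPASim {C : Finset (Finset S)} {r : Finset S → Finset S → Prop}
    (hC : IsPartition C) {L : S → AP} {δ : S → A₁ → A₂ → S → ℝ}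
    (hδ : ∀ s a b, ProbDist (δ s a b))
    (hstab : StableOn C r C r δ)
    (hlab : ∀ s t, Ind C r s t → L s = L t) : IsPASim L δ (Ind C r) := by
  rintro s t hind
  refine ⟨hlab s t hind, ?_⟩
  obtain ⟨P, Q, hP, hQ, hs, ht, hrPQ⟩ := hind
  intro π₁ hπ₁
  obtain ⟨π₁', hπ₁', hsm⟩ := hstab P Q hrPQ s hs t ht π₁ hπ₁
  refine ⟨π₁', hπ₁', ?_⟩
  intro π₂' hπ₂'
  obtain ⟨Δ, hΔmem, hlp⟩ := hsm (distOn (stepD δ t π₁' π₂')) ⟨π₂', hπ₂', rfl⟩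
  obtain ⟨π₂, hπ₂, rfl⟩ := hΔmem
  refine ⟨π₂, hπ₂, ?_⟩
  have hpd1 := probDist_stepD hδ hπ₁ hπ₂ s
  have hpd2 := probDist_stepD hδ hπ₁' hπ₂' t
  exact liftRelP_to_liftRel hC (fun u => (hpd1.1 u).1) (fun u => (hpd2.1 u).1)
    (le_of_eq hpd1.2) hlp

end Convert2
end PAGame

namespace PAGame
open Finset

section Fix
variable {S AP A₁ A₂ : Type*} [Fintype S] [DecidableEq S] [Fintype A₁] [Fintype A₂]

lemma ppLe_refl {C : Finset (Finset S)} {r : Finset S → Finset S → Prop}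
    (hpo : IsPartialOrderOn C r) : PPLe C r C r :=
  ⟨fun P hP => ⟨P, hP, subset_rfl⟩,
   fun P Q h => ⟨P, Q, (hpo.1 P Q h).1, (hpo.1 P Q h).2, subset_rfl, subset_rfl, h⟩⟩

lemma isRho_unique {δ : S → A₁ → A₂ → S → ℝ} {C : Finset (Finset S)}
    {r : Finset S → Finset S → Prop} {C' C'' : Finset (Finset S)}
    {r' r'' : Finset S → Finset S → Prop}
    (h1 : IsRho δ C r C' r') (h2 : IsRho δ C r C'' r'') : C' = C'' ∧ r' = r'' := by
  obtain ⟨⟨hp1, ho1, hl1, hs1⟩, hmax1⟩ := h1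
  obtain ⟨⟨hp2, ho2, hl2, hs2⟩, hmax2⟩ := h2
  exact ppLe_antisymm hp1 hp2 ho1 ho2 (hmax2 C' r' hp1 ho1 hl1 hs1)
    (hmax1 C'' r'' hp2 ho2 hl2 hs2)

end Fix
end PAGame

namespace PAGame
open Finset

theorem stmt12' {S AP A₁ A₂ : Type*} [Fintype S] [DecidableEq S] [DecidableEq AP]
    [Fintype A₁] [Fintype A₂]
    (L : S → AP) (δ : S → A₁ → A₂ → S → ℝ) (hδ : ∀ s a b, ProbDist (δ s a b))
    (Cs : ℕ → Finset (Finset S)) (rs : ℕ → Finset S → Finset S → Prop)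
    (h00 : Cs 0 = labelPartition L)
    (h01 : rs 0 = fun P Q => P ∈ labelPartition L ∧ P = Q)
    (hstep : ∀ i, IsRho δ (Cs i) (rs i) (Cs (i + 1)) (rs (i + 1))) :
    ∃ j, (∀ k, j ≤ k → Cs k = Cs j ∧ rs k = rs j) ∧
      IsPASim L δ (fun s t => ∃ P Q, P ∈ Cs j ∧ Q ∈ Cs j ∧ s ∈ P ∧ t ∈ Q ∧ rs j P Q) ∧
      ∀ R : S → S → Prop, IsPASim L δ R → ∀ s t, R s t →
        ∃ P Q, P ∈ Cs j ∧ Q ∈ Cs j ∧ s ∈ P ∧ t ∈ Q ∧ rs j P Q := by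
  classical
  -- basic facts about the chain
  have hpart : ∀ i, IsPartition (Cs i) := by
    intro i
    cases i with
    | zero => rw [h00]; exact labelPartition_isPartition L
    | succ n => exact (hstep n).1.1
  have hpo : ∀ i, IsPartialOrderOn (Cs i) (rs i) := by
    intro i
    cases i with
    | zero => rw [h00, h01]; exact labelPartition_isPO L
    | succ n => exact (hstep n).1.2.1
  have hle : ∀ i, PPLe (Cs (i + 1)) (rs (i + 1)) (Cs i) (rs i) :=
    fun i => (hstep i).1.2.2.1
  have hmono : ∀ i m, i ≤ m → PPLe (Cs m) (rs m) (Cs i) (rs i) := by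
    intro i m him
    induction m with
    | zero =>
      have : i = 0 := Nat.le_zero.1 him
      subst this; exact ppLe_refl (hpo 0)
    | succ n ih =>
      rcases Nat.lt_or_ge i (n + 1) with h | h
      · exact ppLe_trans (hle n) (ih (Nat.lt_succ_iff.1 h))
      · have : i = n + 1 := le_antisymm him h
        subst this; exact ppLe_refl (hpo (n + 1))
  -- labels are constant along the induced relations
  have hlab : ∀ i s t, Ind (Cs i) (rs i) s t → L s = L t := by
    intro i s t ⟨P, Q, hP, hQ, hs, ht, hr⟩
    obtain ⟨P', Q', hP', hQ', hPP', hQQ', hr0⟩ := (hmono 0 i (Nat.zero_le i)).2 P Q hr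
    rw [h01] at hr0
    obtain ⟨hmem, rfl⟩ := hr0
    exact labelPartition_label hmem (hPP' hs) (hQQ' ht)
  -- stabilization
  have hfin : Finite (Finset (Finset S) × (Finset S → Finset S → Prop)) := by
    infer_instance
  obtain ⟨i, k, hik, hfik⟩ :=
    Finite.exists_ne_map_eq_of_infinite (fun n => ((Cs n, rs n) :
      Finset (Finset S) × (Finset S → Finset S → Prop)))
  -- wlog i < k
  have key : ∀ i k : ℕ, i < k → (Cs i, rs i) = (Cs k, rs k) →
      Cs (i + 1) = Cs i ∧ rs (i + 1) = rs i := by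
    intro i k hlt heq
    have hC : Cs i = Cs k := congrArg Prod.fst heq
    have hr : rs i = rs k := congrArg Prod.snd heq
    have h1 : PPLe (Cs i) (rs i) (Cs (i + 1)) (rs (i + 1)) := by
      rw [hC, hr]
      exact hmono (i + 1) k hlt
    exact ppLe_antisymm (hpart (i + 1)) (hpart i) (hpo (i + 1)) (hpo i)
      (hle i) h1
  have hstab : ∃ j, Cs (j + 1) = Cs j ∧ rs (j + 1) = rs j := by
    rcases lt_or_gt_of_ne hik with h | h
    · exact ⟨i, key i k h hfik⟩
    · exact ⟨k, key k i h hfik.symm⟩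
  obtain ⟨j, hCj, hrj⟩ := hstab
  -- all later stages coincide with stage j
  have hconst : ∀ k, j ≤ k → Cs k = Cs j ∧ rs k = rs j := by
    intro k hjk
    induction k with
    | zero =>
      have : j = 0 := Nat.le_zero.1 hjk
      subst this; exact ⟨rfl, rfl⟩
    | succ n ih =>
      rcases Nat.lt_or_ge j (n + 1) with h | h
      · have hn := ih (Nat.lt_succ_iff.1 h)
        have hstepn := hstep n
        rw [hn.1, hn.2] at hstepn
        have hstepj := hstep j
        have := isRho_unique hstepj hstepn
        exact ⟨this.1.symm.trans hCj, this.2.symm.trans hrj⟩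
      · have : j = n + 1 := le_antisymm hjk h
        subst this; exact ⟨rfl, rfl⟩
  refine ⟨j, hconst, ?_, ?_⟩
  · -- the induced relation is a PA-I-simulation
    have hself : StableOn (Cs j) (rs j) (Cs j) (rs j) δ := by
      have := (hstep j).1.2.2.2
      rwa [hCj, hrj] at this
    exact stable_to_isPASim (hpart j) hδ hself (hlab j)
  · -- it is the largest one
    intro R hR s t hst
    suffices h : ∀ i, ∀ s t, R s t → Ind (Cs i) (rs i) s t from h j s t hst
    intro i
    induction i with
    | zero =>
      intro s t hst
      have hL : L s = L t := (hR s t hst).1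
      refine ⟨Finset.univ.filter (fun u => L u = L s),
        Finset.univ.filter (fun u => L u = L s), ?_, ?_, by simp, by simp [hL], ?_⟩
      · rw [h00]; exact Finset.mem_image_of_mem _ (mem_univ s)
      · rw [h00]; exact Finset.mem_image_of_mem _ (mem_univ s)
      · rw [h01]
        exact ⟨by rw [← h00]; rw [h00]; exact Finset.mem_image_of_mem _ (Finset.mem_univ s), rfl⟩
    | succ n ih =>
      -- pass to the reflexive-transitive closure, a preorder
      set R' : S → S → Prop := Relation.ReflTransGen R with hR'def
      have hrefl : ∀ u, R' u u := fun u => Relation.ReflTransGen.refl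
      have htrans : Transitive R' := fun a b c => Relation.ReflTransGen.trans
      have hR' : IsPASim L δ R' := isPASim_rtg hδ hR
      have hind : ∀ x y, R' x y → Ind (Cs n) (rs n) x y := by
        intro x y hxy
        induction hxy with
        | refl => exact ind_refl (hpart n) (hpo n) x
        | tail hab hbc ihh =>
          exact ind_trans (hpart n) (hpo n) ihh (ih _ _ hbc)
      -- the quotient partition pair of R'
      have hCq : IsPartition (clsPart R') := clsPart_isPartition hrefl htrans
      have hrq : IsPartialOrderOn (clsPart R') (clsRel R') := clsRel_isPO hrefl htrans
      -- each class is contained in the block of its representative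
      have hblk : ∀ u : S, ∃ B ∈ Cs n, u ∈ B ∧ cls R' u ⊆ B := by
        intro u
        obtain ⟨B, ⟨hB, huB⟩, -⟩ := (hpart n).1 u
        refine ⟨B, hB, huB, ?_⟩
        intro v hv
        obtain ⟨huv, hvu⟩ := mem_cls.1 hv
        obtain ⟨P₁, Q₁, hP₁, hQ₁, hu₁, hv₁, hr₁⟩ := hind u v huv
        obtain ⟨P₂, Q₂, hP₂, hQ₂, hv₂, hu₂, hr₂⟩ := hind v u hvu
        have e1 : P₁ = B := blk_unique (hpart n) hP₁ hB hu₁ huB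
        have e2 : Q₂ = B := blk_unique (hpart n) hQ₂ hB hu₂ huB
        have e3 : P₂ = Q₁ := blk_unique (hpart n) hP₂ hQ₁ hv₂ hv₁
        have hr₁' : rs n B Q₁ := e1 ▸ hr₁
        have hr₂' : rs n Q₁ B := by rw [← e2, ← e3]; exact hr₂
        have : B = Q₁ := (hpo n).2.2.1 B Q₁ hr₁' hr₂'
        rw [← this] at hv₁
        exact hv₁
      have hppq : PPLe (clsPart R') (clsRel R') (Cs n) (rs n) := by
        constructor
        · intro P hP
          obtain ⟨u, -, rfl⟩ := Finset.mem_image.1 hP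
          obtain ⟨B, hB, -, hsub⟩ := hblk u
          exact ⟨B, hB, hsub⟩
        · rintro P Q ⟨u, v, rfl, rfl, huv⟩
          obtain ⟨Bu, hBu, huBu, hsubu⟩ := hblk u
          obtain ⟨Bv, hBv, hvBv, hsubv⟩ := hblk v
          obtain ⟨P₁, Q₁, hP₁, hQ₁, hu₁, hv₁, hr₁⟩ := hind u v huv
          have e1 : P₁ = Bu := blk_unique (hpart n) hP₁ hBu hu₁ huBu
          have e2 : Q₁ = Bv := blk_unique (hpart n) hQ₁ hBv hv₁ hvBv
          exact ⟨Bu, Bv, hBu, hBv, hsubu, hsubv, e1 ▸ e2 ▸ hr₁⟩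
      have hstabq : StableOn (clsPart R') (clsRel R') (Cs n) (rs n) δ := by
        rintro P Q ⟨u, v, rfl, rfl, huv⟩ s' hs' t' ht'
        obtain ⟨hus', hs'u⟩ := mem_cls.1 hs'
        obtain ⟨hvt', ht'v⟩ := mem_cls.1 ht'
        have hs't' : R' s' t' := htrans hs'u (htrans huv hvt')
        exact simClause_to_simChoice (hpart n) hδ hind (hR' s' t' hs't').2
      have hppq' : PPLe (clsPart R') (clsRel R') (Cs (n + 1)) (rs (n + 1)) :=
        (hstep n).2 (clsPart R') (clsRel R') hCq hrq hppq hstabq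
      intro s t hst
      have hrq' : clsRel R' (cls R' s) (cls R' t) :=
        ⟨s, t, rfl, rfl, Relation.ReflTransGen.single hst⟩
      obtain ⟨P', Q', hP', hQ', hPP', hQQ', hr'⟩ :=
        hppq'.2 (cls R' s) (cls R' t) hrq'
      exact ⟨P', Q', hP', hQ', hPP' (self_mem_cls hrefl s),
        hQQ' (self_mem_cls hrefl t), hr'⟩

end PAGame

namespace PAGame

/-- Theorem 1: the chain ρⁱ((Σ₀,Id)) stabilizes at some stage j,
and the partition pair there induces the largest PA-I-simulation. -/
theorem stmt12 {S AP A₁ A₂ : Type*} [Fintype S] [DecidableEq S] [DecidableEq AP]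
    [Fintype A₁] [Fintype A₂]
    (L : S → AP) (δ : S → A₁ → A₂ → S → ℝ) (hδ : ∀ s a b, ProbDist (δ s a b))
    (Cs : ℕ → Finset (Finset S)) (rs : ℕ → Finset S → Finset S → Prop)
    (h00 : Cs 0 = labelPartition L)
    (h01 : rs 0 = fun P Q => P ∈ labelPartition L ∧ P = Q)
    (hstep : ∀ i, IsRho δ (Cs i) (rs i) (Cs (i + 1)) (rs (i + 1))) :
    ∃ j, (∀ k, j ≤ k → Cs k = Cs j ∧ rs k = rs j) ∧
      IsPASim L δ (fun s t => ∃ P Q, P ∈ Cs j ∧ Q ∈ Cs j ∧ s ∈ P ∧ t ∈ Q ∧ rs j P Q) ∧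
      ∀ R : S → S → Prop, IsPASim L δ R → ∀ s t, R s t →
        ∃ P Q, P ∈ Cs j ∧ Q ∈ Cs j ∧ s ∈ P ∧ t ∈ Q ∧ rs j P Q := by
  exact stmt12' L δ hδ Cs rs h00 h01 hstep

end PAGame
end
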